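/- Additive decomposition of Γ across a child (inductive step of Lemma 2): Let u be a vertex with children u_1,…,u_d, d ≥ 2. Let T' = T \ T_{u_d} and T'' = T \ (T_{u_1} ∪ ⋯ ∪ T_{u_{d−1}}), and let Γ, Γ', Γ'' denote Γ_ξ(u,·,·) computed in T, T', T'' respectively. Then for all k ≥ 1, l ≥ 0: Γ(k,l) = min{ Γ'(k',l') + Γ''(k'',l'') : k' + k'' = k + 1, k',k'' ≥ 1, l' + l'' = l }. -/

import Mathlib

open scoped Classical

noncomputable section

/-- A finite rooted weighted tree, encoded by a parent function. The root has an
auxiliary parent edge `e_root` of weight `0` (`parent root = root`). Edges are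
identified with their lower endpoints: the parent edge `e_v` of a vertex `v`
has weight `c v`. -/
structure RTree (V : Type) [Fintype V] [DecidableEq V] where
  root : V
  parent : V → V
  w : V → ℚ
  c : V → ℚ
  parent_root : parent root = root
  reaches_root : ∀ v : V, ∃ n : ℕ, parent^[n] v = root
  w_pos : ∀ v : V, 0 < w v
  c_pos : ∀ v : V, v ≠ root → 0 < c v
  c_root : c root = 0

namespace RTree

variable {V : Type} [Fintype V] [DecidableEq V] (T : RTree V)

/-- `v` lies in the subtree rooted at `u` (equivalently, edge `e_v ≤ e_u` in the
natural partial order induced by the root). -/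
def below (u v : V) : Prop := ∃ n : ℕ, T.parent^[n] v = u

/-- The vertex set of the subtree `T_u` (also of `T_{e_u}`). -/
def desc (u : V) : Finset V := Finset.univ.filter (fun v => T.below u v)

/-- Total vertex weight `ω(A)`. -/
def wsum (A : Finset V) : ℚ := ∑ v ∈ A, T.w v

/-- The (lower endpoints of) edges with exactly one endpoint in `A`, relative to a
ground set `W` of edges/vertices (`W = univ` gives the whole tree `T`). -/
def boundaryW (W A : Finset V) : Finset V :=
  W.filter (fun v => Xor' (v ∈ A) (T.parent v ∈ A))

/-- The edge boundary `∂A` in the whole tree. -/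
def boundary (A : Finset V) : Finset V := T.boundaryW Finset.univ A

/-- `c(∂A)` relative to ground set `W`. -/
def cutW (W A : Finset V) : ℚ := ∑ v ∈ T.boundaryW W A, T.c v

/-- `c(∂A)` in the whole tree. -/
def cut (A : Finset V) : ℚ := T.cutW Finset.univ A

/-- Vertex set of the subtree `T_u` relative to the ground set `W`. -/
def descW (W : Finset V) (u : V) : Finset V := T.desc u ∩ W

/-- `ε_ξ(e_v) = ξ·ω(T_{e_v}) + c(e_v)`. -/
def eps (ξ : ℚ) (v : V) : ℚ := ξ * T.wsum (T.desc v) + T.c v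

/-- `A` induces a connected subgraph (a subtree) of the tree: some `a ∈ A` is
reachable from every `v ∈ A` by a parent-chain staying inside `A`. -/
def connectedIn (A : Finset V) : Prop :=
  ∃ a ∈ A, ∀ v ∈ A, ∃ n : ℕ, T.parent^[n] v = a ∧ ∀ m : ℕ, m ≤ n → T.parent^[m] v ∈ A

/-- The children of a vertex. -/
def children (u : V) : Finset V :=
  Finset.univ.filter (fun v => T.parent v = u ∧ v ≠ u)

/-- `A` witnesses `μ_ξ(u,k,l) = 1` relative to ground set `W`: a connected
`k`-subpartition of `T_u` whose parts all have conductance at most `ξ`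
(boundaries computed in the ground set), with at most `l` residue vertices. -/
def muWitnessW (W : Finset V) (ξ : ℚ) (u : V) {k : ℕ} (A : Fin k → Finset V) (l : ℕ) : Prop :=
  (∀ i, (A i).Nonempty) ∧ (∀ i j, i ≠ j → Disjoint (A i) (A j)) ∧
  (∀ i, A i ⊆ T.descW W u) ∧ (∀ i, T.connectedIn (A i)) ∧
  (∀ i, T.cutW W (A i) / T.wsum (A i) ≤ ξ) ∧
  ((T.descW W u \ Finset.univ.biUnion A).card ≤ l)

/-- `μ_ξ(u,k,l) = 1` relative to ground set `W`. -/
def muW (W : Finset V) (ξ : ℚ) (u : V) (k l : ℕ) : Prop :=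
  ∃ A : Fin k → Finset V, T.muWitnessW W ξ u A l

/-- `A` witnesses `μ_ξ(u,k,l) = 1` (in the whole tree `T`). -/
def muWitness (ξ : ℚ) (u : V) {k : ℕ} (A : Fin k → Finset V) (l : ℕ) : Prop :=
  T.muWitnessW Finset.univ ξ u A l

/-- `μ_ξ(u,k,l) = 1`. -/
def mu (ξ : ℚ) (u : V) (k l : ℕ) : Prop := T.muW Finset.univ ξ u k l

/-- Membership in `𝒞_ξ(u,k,l)` relative to ground set `W`: a connected
`k`-subpartition of `T_u` with `u ∈ A₁`, residue at most `l`, and conductance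
at most `ξ` for every part other than `A₁`. -/
def inCW (W : Finset V) (ξ : ℚ) (u : V) {k : ℕ} (A : Fin k → Finset V) (l : ℕ) : Prop :=
  (∀ i, (A i).Nonempty) ∧ (∀ i j, i ≠ j → Disjoint (A i) (A j)) ∧
  (∀ i, A i ⊆ T.descW W u) ∧ (∀ i, T.connectedIn (A i)) ∧
  (∀ h : 0 < k, u ∈ A ⟨0, h⟩) ∧
  (∀ i : Fin k, i.val ≠ 0 → T.cutW W (A i) / T.wsum (A i) ≤ ξ) ∧
  ((T.descW W u \ Finset.univ.biUnion A).card ≤ l)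

/-- Membership in `𝒞_ξ(u,k,l)`. -/
def inC (ξ : ℚ) (u : V) {k : ℕ} (A : Fin k → Finset V) (l : ℕ) : Prop :=
  T.inCW Finset.univ ξ u A l

/-- `γ_ξ(𝒜) = Σ_{e ∈ ∂A₁ \ {e_u}} ε_ξ(e)` relative to ground set `W`. -/
def gammaValW (W : Finset V) (ξ : ℚ) (u : V) (A1 : Finset V) : ℚ :=
  ∑ v ∈ (T.boundaryW W A1).erase u, (ξ * T.wsum (T.descW W v) + T.c v)

/-- `γ_ξ(𝒜) = Σ_{e ∈ ∂A₁ \ {e_u}} ε_ξ(e)`. -/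
def gammaVal (ξ : ℚ) (u : V) (A1 : Finset V) : ℚ := T.gammaValW Finset.univ ξ u A1

/-- `Γ_ξ(u,k,l) = min over 𝒞_ξ(u,k,l) of γ_ξ`, with value `+∞` (`⊤` of `EReal`)
when `𝒞_ξ(u,k,l)` is empty, relative to ground set `W`. -/
def GammaW (W : Finset V) (ξ : ℚ) (u : V) (k l : ℕ) : EReal :=
  sInf {x : EReal | ∃ (h : 0 < k) (A : Fin k → Finset V),
    T.inCW W ξ u A l ∧ x = ((T.gammaValW W ξ u (A ⟨0, h⟩) : ℝ) : EReal)}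

/-- `Γ_ξ(u,k,l)`. -/
def Gamma (ξ : ℚ) (u : V) (k l : ℕ) : EReal := T.GammaW Finset.univ ξ u k l

end RTree

/-!
Cut `T_u` at the edge `e_{u_d}`. Every part of a subpartition of `T_u` other than `A₁` is
connected and avoids `u`, so it lies entirely inside `T_{u_d}` or entirely outside it, while `A₁`
splits into `A₁ \ T_{u_d}` and `A₁ ∩ ({u} ∪ T_{u_d})`, both containing `u`. This splits a member
of `𝒞_ξ(u, k, l)` in `T` into members of the corresponding classes in `T'` and `T''` with
`k' + k'' = k + 1` and residues adding up to the original one; conversely two such members glue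
along `u`. The boundary edges of `A₁` other than `e_u` are those of its two halves, and the
subtree below each of them lies on one side of the cut, so `γ_ξ` is additive. As `γ_ξ` takes
finitely many values, a finite `Γ_ξ` is attained, and both inequalities follow.
-/

theorem Finset.card_union_sdiff_union_of_inter_subset {α : Type*} [DecidableEq α]
    {D' D'' C' C'' : Finset α} (hC' : C' ⊆ D') (hC'' : C'' ⊆ D'') (h : D' ∩ D'' ⊆ C' ∩ C'') :
    ((D' ∪ D'') \ (C' ∪ C'')).card = (D' \ C').card + (D'' \ C'').card := by
  have hsplit : (D' ∪ D'') \ (C' ∪ C'') = (D' \ C') ∪ (D'' \ C'') := by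
    ext x
    have h1 : x ∈ C' → x ∈ D' := fun hx => hC' hx
    have h2 : x ∈ C'' → x ∈ D'' := fun hx => hC'' hx
    have h3 : x ∈ D' → x ∈ D'' → x ∈ C' ∧ x ∈ C'' := fun hx hx' =>
      Finset.mem_inter.1 (h (Finset.mem_inter.2 ⟨hx, hx'⟩))
    simp only [Finset.mem_union, Finset.mem_sdiff]
    tauto
  rw [hsplit, Finset.card_union_of_disjoint]
  refine Finset.disjoint_left.2 fun x hx hx' => (Finset.mem_sdiff.1 hx).2 ?_
  exact (Finset.mem_inter.1 (h (Finset.mem_inter.2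
    ⟨(Finset.mem_sdiff.1 hx).1, (Finset.mem_sdiff.1 hx').1⟩))).1

namespace RTree

variable {V : Type} [Fintype V] [DecidableEq V] (T : RTree V)

section Descendants

lemma mem_desc {u v : V} : v ∈ T.desc u ↔ ∃ n, T.parent^[n] v = u := by
  unfold desc below
  exact Finset.mem_filter_univ _

lemma mem_desc_self (u : V) : u ∈ T.desc u := T.mem_desc.2 ⟨0, rfl⟩

lemma mem_desc_parent_iterate (v : V) (n : ℕ) : v ∈ T.desc (T.parent^[n] v) :=
  T.mem_desc.2 ⟨n, rfl⟩

lemma mem_desc_trans {u v x : V} (hv : v ∈ T.desc x) (hx : x ∈ T.desc u) : v ∈ T.desc u := by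
  obtain ⟨n, rfl⟩ := T.mem_desc.1 hv
  obtain ⟨m, rfl⟩ := T.mem_desc.1 hx
  exact T.mem_desc.2 ⟨m + n, Function.iterate_add_apply _ _ _ _⟩

lemma parent_mem_desc {x v : V} (hv : v ∈ T.desc x) (hne : v ≠ x) :
    T.parent v ∈ T.desc x := by
  obtain ⟨_ | n, hn⟩ := T.mem_desc.1 hv
  · exact absurd hn hne
  · exact T.mem_desc.2 ⟨n, by rwa [← Function.iterate_succ_apply]⟩

lemma mem_desc_of_parent_mem {x v : V} (h : T.parent v ∈ T.desc x) : v ∈ T.desc x :=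
  T.mem_desc_trans (T.mem_desc_parent_iterate v 1) h

lemma mem_desc_or_mem_desc {v x y : V} (hx : v ∈ T.desc x) (hy : v ∈ T.desc y) :
    x ∈ T.desc y ∨ y ∈ T.desc x := by
  obtain ⟨a, rfl⟩ := T.mem_desc.1 hx
  obtain ⟨b, rfl⟩ := T.mem_desc.1 hy
  rcases le_total a b with hab | hab
  · obtain ⟨c, rfl⟩ := Nat.exists_eq_add_of_le hab
    left
    rw [add_comm, Function.iterate_add_apply]
    exact T.mem_desc_parent_iterate _ c
  · obtain ⟨c, rfl⟩ := Nat.exists_eq_add_of_le hab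
    right
    rw [add_comm, Function.iterate_add_apply]
    exact T.mem_desc_parent_iterate _ c

lemma eq_root_of_iterate_eq_self {x : V} {n : ℕ} (hn : 0 < n) (hx : T.parent^[n] x = x) :
    x = T.root := by
  obtain ⟨N, hN⟩ := T.reaches_root x
  calc x = T.parent^[N * n] x := ((Function.IsPeriodicPt.const_mul hx N).eq).symm
    _ = T.parent^[N * n - N] (T.parent^[N] x) := by
      rw [← Function.iterate_add_apply, Nat.sub_add_cancel (Nat.le_mul_of_pos_right N hn)]
    _ = T.root := by rw [hN, Function.iterate_fixed T.parent_root]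

lemma eq_of_mem_desc_of_mem_desc {u x : V} (hxu : x ∈ T.desc u) (hux : u ∈ T.desc x) :
    x = u := by
  obtain ⟨j, hj⟩ := T.mem_desc.1 hxu
  obtain ⟨m, hm⟩ := T.mem_desc.1 hux
  rcases Nat.eq_zero_or_pos (m + j) with h | h
  · obtain ⟨rfl, rfl⟩ : m = 0 ∧ j = 0 := by omega
    exact hm.symm
  · have hx : x = T.root :=
      T.eq_root_of_iterate_eq_self h (by rw [Function.iterate_add_apply, hj, hm])
    rw [← hj, hx, Function.iterate_fixed T.parent_root]

end Descendants

section Child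

variable {u ud : V}

lemma parent_eq_of_mem_children (h : ud ∈ T.children u) : T.parent ud = u :=
  (Finset.mem_filter.1 h).2.1

lemma mem_desc_of_mem_children (h : ud ∈ T.children u) : ud ∈ T.desc u :=
  T.mem_desc.2 ⟨1, T.parent_eq_of_mem_children h⟩

lemma desc_subset_of_mem_children (h : ud ∈ T.children u) : T.desc ud ⊆ T.desc u :=
  fun _ hv => T.mem_desc_trans hv (T.mem_desc_of_mem_children h)

lemma notMem_desc_of_mem_children (h : ud ∈ T.children u) : u ∉ T.desc ud := fun hu =>
  (Finset.mem_filter.1 h).2.2 (T.eq_of_mem_desc_of_mem_desc (T.mem_desc_of_mem_children h) hu)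

lemma eq_or_mem_desc_of_mem_children (h : ud ∈ T.children u) {x v : V} (hx : x ∈ T.desc u)
    (hvx : v ∈ T.desc x) (hv : v ∈ T.desc ud) : x = u ∨ x ∈ T.desc ud := by
  by_cases hxd : x ∈ T.desc ud
  · exact Or.inr hxd
  have hdx : ud ∈ T.desc x := (T.mem_desc_or_mem_desc hv hvx).resolve_right hxd
  have hux : u ∈ T.desc x := T.parent_eq_of_mem_children h ▸
    T.parent_mem_desc hdx fun e => hxd (e ▸ T.mem_desc_self ud)
  exact Or.inl (T.eq_of_mem_desc_of_mem_desc hx hux)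

lemma disjoint_desc_of_mem_children (h : ud ∈ T.children u) {x : V} (hx : x ∈ T.desc u)
    (hxd : x ∉ T.desc ud) (hxu : x ≠ u) : Disjoint (T.desc x) (T.desc ud) :=
  Finset.disjoint_left.2 fun _ hvx hv =>
    (T.eq_or_mem_desc_of_mem_children h hx hvx hv).elim hxu hxd

end Child

section Ground

variable {u ud : V}

/-- The ground set of the pruned tree `T' = T \ T_{u_d}`. -/
def groundT' (ud : V) : Finset V := Finset.univ \ T.desc ud

/-- The ground set of the pruned tree `T'' = T \ (T_{u_1} ∪ ⋯ ∪ T_{u_{d-1}})`. -/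
def groundT'' (u ud : V) : Finset V := (Finset.univ \ T.desc u) ∪ insert u (T.desc ud)

lemma descW_univ (v : V) : T.descW Finset.univ v = T.desc v := Finset.inter_univ _

lemma descW_eq_desc {W : Finset V} {v : V} (h : T.desc v ⊆ W) : T.descW W v = T.desc v :=
  Finset.inter_eq_left.2 h

lemma descW_subset_desc (W : Finset V) (v : V) : T.descW W v ⊆ T.desc v :=
  Finset.inter_subset_left

lemma descW_groundT' (u ud : V) : T.descW (T.groundT' ud) u = T.desc u \ T.desc ud := by
  ext v
  simp [descW, groundT']

lemma descW_groundT'' (h : ud ∈ T.children u) :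
    T.descW (T.groundT'' u ud) u = insert u (T.desc ud) := by
  ext v
  simp only [descW, groundT'', Finset.mem_inter, Finset.mem_union, Finset.mem_sdiff,
    Finset.mem_univ, true_and, Finset.mem_insert]
  constructor
  · rintro ⟨hv, (hv' | hv')⟩
    · exact absurd hv hv'
    · exact hv'
  · rintro (rfl | hv)
    · exact ⟨T.mem_desc_self v, Or.inr (Or.inl rfl)⟩
    · exact ⟨T.desc_subset_of_mem_children h hv, Or.inr (Or.inr hv)⟩

lemma disjoint_of_subset_sdiff_of_subset_insert {p q : Finset V}
    (hp : p ⊆ T.desc u \ T.desc ud) (hq : q ⊆ insert u (T.desc ud)) (hu : u ∉ p ∨ u ∉ q) :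
    Disjoint p q := by
  refine Finset.disjoint_left.2 fun v hvp hvq => ?_
  rcases Finset.mem_insert.1 (hq hvq) with rfl | hv
  · exact hu.elim (· hvp) (· hvq)
  · exact (Finset.mem_sdiff.1 (hp hvp)).2 hv

end Ground

section Boundary

variable {W A : Finset V}

lemma mem_boundaryW {v : V} :
    v ∈ T.boundaryW W A ↔ v ∈ W ∧ Xor (v ∈ A) (T.parent v ∈ A) :=
  Finset.mem_filter

lemma boundaryW_subset_desc {x : V} (hA : A ⊆ T.desc x) : T.boundaryW W A ⊆ T.desc x := by
  intro v hv
  rcases (T.mem_boundaryW.1 hv).2 with ⟨hvA, -⟩ | ⟨hpA, -⟩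
  · exact hA hvA
  · exact T.mem_desc_of_parent_mem (hA hpA)

lemma disjoint_boundaryW_desc {x : V} (hA : Disjoint A (T.desc x)) (hx : T.parent x ∉ A) :
    Disjoint (T.boundaryW W A) (T.desc x) := by
  refine Finset.disjoint_right.2 fun v hv hb => ?_
  rcases (T.mem_boundaryW.1 hb).2 with ⟨hvA, -⟩ | ⟨hpA, -⟩
  · exact Finset.disjoint_left.1 hA hvA hv
  · by_cases hvx : v = x
    · exact hx (hvx ▸ hpA)
    · exact Finset.disjoint_left.1 hA hpA (T.parent_mem_desc hv hvx)

lemma cutW_eq_cutW_univ (h : T.boundaryW Finset.univ A ⊆ W) :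
    T.cutW W A = T.cutW Finset.univ A := by
  have : T.boundaryW W A = T.boundaryW Finset.univ A := by
    ext v
    simp only [mem_boundaryW, Finset.mem_univ, true_and, and_iff_right_iff_imp]
    exact fun hv => h (T.mem_boundaryW.2 ⟨Finset.mem_univ v, hv⟩)
  rw [cutW, this, cutW]

variable {u ud : V}

lemma cutW_groundT'_eq (h : ud ∈ T.children u) (hA : Disjoint A (T.desc ud)) (hu : u ∉ A) :
    T.cutW (T.groundT' ud) A = T.cutW Finset.univ A :=
  T.cutW_eq_cutW_univ fun v hv => Finset.mem_sdiff.2 ⟨Finset.mem_univ v, Finset.disjoint_left.1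
    (T.disjoint_boundaryW_desc hA (T.parent_eq_of_mem_children h ▸ hu)) hv⟩

lemma cutW_groundT''_eq (hA : A ⊆ T.desc ud) :
    T.cutW (T.groundT'' u ud) A = T.cutW Finset.univ A :=
  T.cutW_eq_cutW_univ fun _ hv =>
    Finset.mem_union_right _ (Finset.mem_insert_of_mem (T.boundaryW_subset_desc hA hv))

end Boundary

section GammaSplit

variable {u ud : V} {B' B'' : Finset V}

lemma xor_mem_union_iff_left (hB'' : B'' ⊆ insert u (T.desc ud)) (hu' : u ∈ B') {v : V}
    (hv : v ∉ T.desc ud) (hvu : v ≠ u) :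
    Xor (v ∈ B' ∪ B'') (T.parent v ∈ B' ∪ B'') ↔ Xor (v ∈ B') (T.parent v ∈ B') := by
  have hv' : v ∈ B' ∪ B'' ↔ v ∈ B' := by
    refine ⟨fun hv' => (Finset.mem_union.1 hv').resolve_right fun hv'' => ?_,
      Finset.mem_union_left _⟩
    rcases Finset.mem_insert.1 (hB'' hv'') with rfl | hvd
    exacts [hvu rfl, hv hvd]
  have hp : T.parent v ∈ B' ∪ B'' ↔ T.parent v ∈ B' := by
    refine ⟨fun hp => (Finset.mem_union.1 hp).elim id fun hp'' => ?_, Finset.mem_union_left _⟩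
    rcases Finset.mem_insert.1 (hB'' hp'') with hpu | hpd
    exacts [hpu ▸ hu', absurd (T.mem_desc_of_parent_mem hpd) hv]
  rw [hv', hp]

lemma xor_mem_union_iff_right (h : ud ∈ T.children u) (hB' : Disjoint B' (T.desc ud))
    (hu'' : u ∈ B'') {v : V} (hv : v ∈ T.desc ud) :
    Xor (v ∈ B' ∪ B'') (T.parent v ∈ B' ∪ B'') ↔
      Xor (v ∈ B'') (T.parent v ∈ B'') := by
  have hv' : v ∈ B' ∪ B'' ↔ v ∈ B'' :=
    ⟨fun hv' => (Finset.mem_union.1 hv').resolve_left fun hv'' =>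
      Finset.disjoint_left.1 hB' hv'' hv, Finset.mem_union_right _⟩
  have hp : T.parent v ∈ B' ∪ B'' ↔ T.parent v ∈ B'' := by
    refine ⟨fun hp => (Finset.mem_union.1 hp).elim (fun hp' => ?_) id, Finset.mem_union_right _⟩
    by_cases hvd : v = ud
    · rwa [hvd, T.parent_eq_of_mem_children h]
    · exact absurd (T.parent_mem_desc hv hvd) (Finset.disjoint_left.1 hB' hp')
  rw [hv', hp]

lemma erase_boundaryW_groundT' (hB'' : B'' ⊆ insert u (T.desc ud)) (hu' : u ∈ B') :
    (T.boundaryW (T.groundT' ud) B').erase u =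
      ((T.boundaryW Finset.univ (B' ∪ B'')).erase u).filter (· ∉ T.desc ud) := by
  ext v
  simp only [Finset.mem_filter, Finset.mem_erase, mem_boundaryW, groundT', Finset.mem_sdiff,
    Finset.mem_univ, true_and]
  constructor
  · rintro ⟨hvu, hv, hx⟩
    exact ⟨⟨hvu, (T.xor_mem_union_iff_left hB'' hu' hv hvu).2 hx⟩, hv⟩
  · rintro ⟨⟨hvu, hx⟩, hv⟩
    exact ⟨hvu, hv, (T.xor_mem_union_iff_left hB'' hu' hv hvu).1 hx⟩

lemma erase_boundaryW_groundT'' (h : ud ∈ T.children u) (hB' : Disjoint B' (T.desc ud))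
    (hB'' : B'' ⊆ insert u (T.desc ud)) (hu'' : u ∈ B'') :
    (T.boundaryW (T.groundT'' u ud) B'').erase u =
      ((T.boundaryW Finset.univ (B' ∪ B'')).erase u).filter (· ∈ T.desc ud) := by
  ext v
  simp only [Finset.mem_filter, Finset.mem_erase, mem_boundaryW, Finset.mem_univ, true_and]
  constructor
  · rintro ⟨hvu, hvW, hx⟩
    have hvdu : v ∈ T.desc u := T.boundaryW_subset_desc (W := T.groundT'' u ud)
      (hB''.trans (Finset.insert_subset (T.mem_desc_self u) (T.desc_subset_of_mem_children h)))
      (T.mem_boundaryW.2 ⟨hvW, hx⟩)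
    have hv : v ∈ T.desc ud := by
      simp only [groundT'', Finset.mem_union, Finset.mem_sdiff, Finset.mem_univ, true_and,
        Finset.mem_insert] at hvW
      tauto
    exact ⟨⟨hvu, (T.xor_mem_union_iff_right h hB' hu'' hv).2 hx⟩, hv⟩
  · rintro ⟨⟨hvu, hx⟩, hv⟩
    exact ⟨hvu, Finset.mem_union_right _ (Finset.mem_insert_of_mem hv),
      (T.xor_mem_union_iff_right h hB' hu'' hv).1 hx⟩

/-- The subtree below a boundary edge of `B'` (resp. `B''`) other than `e_u` misses (resp. lies
in) `T_{u_d}`, so its weight is the same in `T` as in `T'` (resp. `T''`). -/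
lemma gammaValW_union (h : ud ∈ T.children u) (ξ : ℚ) (hB' : B' ⊆ T.desc u \ T.desc ud)
    (hB'' : B'' ⊆ insert u (T.desc ud)) (hu' : u ∈ B') (hu'' : u ∈ B'') :
    T.gammaValW Finset.univ ξ u (B' ∪ B'') =
      T.gammaValW (T.groundT' ud) ξ u B' + T.gammaValW (T.groundT'' u ud) ξ u B'' := by
  have hB'd : Disjoint B' (T.desc ud) := Finset.disjoint_of_subset_left hB' Finset.sdiff_disjoint
  unfold gammaValW
  rw [← Finset.sum_filter_not_add_sum_filter _ (· ∈ T.desc ud),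
    ← T.erase_boundaryW_groundT' hB'' hu', ← T.erase_boundaryW_groundT'' h hB'd hB'' hu'']
  congr 1 <;> refine Finset.sum_congr rfl fun v hv => ?_ <;> rw [descW_univ]
  · obtain ⟨hvu, hvb⟩ := Finset.mem_erase.1 hv
    have hvd : v ∉ T.desc ud := by simpa [groundT'] using (T.mem_boundaryW.1 hvb).1
    have hvdu : v ∈ T.desc u := T.boundaryW_subset_desc (hB'.trans Finset.sdiff_subset) hvb
    rw [T.descW_eq_desc (W := T.groundT' ud) fun w hw => Finset.mem_sdiff.2 ⟨Finset.mem_univ w,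
      Finset.disjoint_left.1 (T.disjoint_desc_of_mem_children h hvdu hvd hvu) hw⟩]
  · rw [T.erase_boundaryW_groundT'' h hB'd hB'' hu''] at hv
    rw [T.descW_eq_desc (W := T.groundT'' u ud) fun w hw => Finset.mem_union_right _
      (Finset.mem_insert_of_mem (T.mem_desc_trans hw (Finset.mem_filter.1 hv).2))]

end GammaSplit

section Connected

variable {u : V} {A : Finset V}

lemma chain_to_of_connectedIn (hA : T.connectedIn A) (hsub : A ⊆ T.desc u) (hu : u ∈ A) :
    ∀ v ∈ A, ∃ n, T.parent^[n] v = u ∧ ∀ m ≤ n, T.parent^[m] v ∈ A := by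
  obtain ⟨a, ha, hchain⟩ := hA
  obtain ⟨n, hn, -⟩ := hchain u hu
  obtain rfl : a = u := T.eq_of_mem_desc_of_mem_desc (hsub ha) (T.mem_desc.2 ⟨n, hn⟩)
  exact hchain

lemma connectedIn_union {A' : Finset V} (hA : T.connectedIn A) (hA' : T.connectedIn A')
    (hsub : A ⊆ T.desc u) (hsub' : A' ⊆ T.desc u) (hu : u ∈ A) (hu' : u ∈ A') :
    T.connectedIn (A ∪ A') := by
  refine ⟨u, Finset.mem_union_left _ hu, fun v hv => ?_⟩
  rcases Finset.mem_union.1 hv with hv | hv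
  · obtain ⟨n, hn, hchain⟩ := T.chain_to_of_connectedIn hA hsub hu v hv
    exact ⟨n, hn, fun m hm => Finset.mem_union_left _ (hchain m hm)⟩
  · obtain ⟨n, hn, hchain⟩ := T.chain_to_of_connectedIn hA' hsub' hu' v hv
    exact ⟨n, hn, fun m hm => Finset.mem_union_right _ (hchain m hm)⟩

lemma connectedIn_sdiff_desc {x : V} (hA : T.connectedIn A) (hsub : A ⊆ T.desc u)
    (hu : u ∈ A) (hux : u ∉ T.desc x) : T.connectedIn (A \ T.desc x) := by
  refine ⟨u, Finset.mem_sdiff.2 ⟨hu, hux⟩, fun v hv => ?_⟩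
  obtain ⟨hvA, hvx⟩ := Finset.mem_sdiff.1 hv
  obtain ⟨n, hn, hchain⟩ := T.chain_to_of_connectedIn hA hsub hu v hvA
  exact ⟨n, hn, fun m hm => Finset.mem_sdiff.2
    ⟨hchain m hm, fun hx => hvx (T.mem_desc_trans (T.mem_desc_parent_iterate v m) hx)⟩⟩

variable {ud : V}

lemma connectedIn_inter_insert_desc (h : ud ∈ T.children u) (hA : T.connectedIn A)
    (hsub : A ⊆ T.desc u) (hu : u ∈ A) : T.connectedIn (A ∩ insert u (T.desc ud)) := by
  refine ⟨u, Finset.mem_inter.2 ⟨hu, Finset.mem_insert_self u _⟩, fun v hv => ?_⟩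
  obtain ⟨hvA, hvi⟩ := Finset.mem_inter.1 hv
  rcases Finset.mem_insert.1 hvi with rfl | hvd
  · exact ⟨0, rfl, fun m hm => by simpa [Nat.le_zero.1 hm] using hv⟩
  obtain ⟨n, hn, hchain⟩ := T.chain_to_of_connectedIn hA hsub hu v hvA
  refine ⟨n, hn, fun m hm => Finset.mem_inter.2 ⟨hchain m hm, ?_⟩⟩
  rcases T.eq_or_mem_desc_of_mem_children h (hsub (hchain m hm))
    (T.mem_desc_parent_iterate v m) hvd with hm' | hm'
  · rw [hm']
    exact Finset.mem_insert_self u _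
  · exact Finset.mem_insert_of_mem hm'

lemma subset_desc_or_disjoint_desc (h : ud ∈ T.children u) (hA : T.connectedIn A)
    (hsub : A ⊆ T.desc u) (hu : u ∉ A) : A ⊆ T.desc ud ∨ Disjoint A (T.desc ud) := by
  obtain ⟨a, ha, hchain⟩ := hA
  by_cases had : a ∈ T.desc ud
  · refine Or.inl fun v hv => ?_
    obtain ⟨n, hn, -⟩ := hchain v hv
    exact T.mem_desc_trans (hn ▸ T.mem_desc_parent_iterate v n) had
  · refine Or.inr (Finset.disjoint_left.2 fun v hv hvd => ?_)
    obtain ⟨n, hn, -⟩ := hchain v hv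
    rcases T.eq_or_mem_desc_of_mem_children h (hsub ha) (hn ▸ T.mem_desc_parent_iterate v n)
      hvd with rfl | had'
    exacts [hu ha, had had']

end Connected

section Subpartition

variable {W : Finset V} {ξ : ℚ} {u : V} {l : ℕ}

/-- An unordered member of `𝒞_ξ(u, P.card + 1, ·)`: `B` plays the role of `A₁` and `P` is the
set of the other parts. The residue bound is kept apart, in `residue`. -/
structure IsCSubpartition (W : Finset V) (ξ : ℚ) (u : V) (B : Finset V)
    (P : Finset (Finset V)) : Prop where
  mem_root : u ∈ B
  root_subset : B ⊆ T.descW W u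
  root_connected : T.connectedIn B
  nonempty : ∀ p ∈ P, p.Nonempty
  subset : ∀ p ∈ P, p ⊆ T.descW W u
  connected : ∀ p ∈ P, T.connectedIn p
  conductance : ∀ p ∈ P, T.cutW W p / T.wsum p ≤ ξ
  disjoint_root : ∀ p ∈ P, Disjoint B p
  pairwiseDisjoint : (P : Set (Finset V)).PairwiseDisjoint id

def residue (W : Finset V) (u : V) (B : Finset V) (P : Finset (Finset V)) : Finset V :=
  T.descW W u \ (B ∪ P.biUnion id)

variable {T}

lemma IsCSubpartition.notMem {B : Finset V} {P : Finset (Finset V)}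
    (hP : T.IsCSubpartition W ξ u B P) {p : Finset V} (hp : p ∈ P) : u ∉ p :=
  Finset.disjoint_left.1 (hP.disjoint_root p hp) hP.mem_root

lemma exists_isCSubpartition_of_inCW {k : ℕ} (hk : 0 < k) {A : Fin k → Finset V}
    (hA : T.inCW W ξ u A l) :
    ∃ P : Finset (Finset V), P.card + 1 = k ∧ T.IsCSubpartition W ξ u (A ⟨0, hk⟩) P ∧
      (T.residue W u (A ⟨0, hk⟩) P).card ≤ l := by
  obtain ⟨hne, hdisj, hsub, hconn, hu, hcond, hres⟩ := hA
  set i₀ : Fin k := ⟨0, hk⟩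
  have hinj : Function.Injective A := fun i j hij => by
    by_contra hij'
    have := hdisj i j hij'
    rw [← hij, Finset.disjoint_self_iff_empty] at this
    exact (hne i).ne_empty this
  have hcover :
      A i₀ ∪ ((Finset.univ.erase i₀).image A).biUnion id = Finset.univ.biUnion A := by
    conv_rhs => rw [← Finset.insert_erase (Finset.mem_univ i₀), Finset.biUnion_insert]
    rw [Finset.image_biUnion]
    rfl
  refine ⟨(Finset.univ.erase i₀).image A, ?_,
    ⟨hu hk, hsub i₀, hconn i₀, ?_, ?_, ?_, ?_, ?_, ?_⟩, by rwa [residue, hcover]⟩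
  · rw [Finset.card_image_of_injective _ hinj, Finset.card_erase_of_mem (Finset.mem_univ _),
      Finset.card_univ, Fintype.card_fin]
    omega
  · exact Finset.forall_mem_image.2 fun i _ => hne i
  · exact Finset.forall_mem_image.2 fun i _ => hsub i
  · exact Finset.forall_mem_image.2 fun i _ => hconn i
  · exact Finset.forall_mem_image.2 fun i hi =>
      hcond i fun h0 => Finset.ne_of_mem_erase hi (Fin.ext h0)
  · exact Finset.forall_mem_image.2 fun i hi => hdisj i₀ i (Finset.ne_of_mem_erase hi).symm
  · rintro _ hp _ hq hpq
    obtain ⟨i, -, rfl⟩ := Finset.mem_image.1 hp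
    obtain ⟨j, -, rfl⟩ := Finset.mem_image.1 hq
    exact hdisj i j fun hij => hpq (congrArg A hij)

lemma IsCSubpartition.inCW_cons {B : Finset V} {P : Finset (Finset V)}
    (hP : T.IsCSubpartition W ξ u B P) (hl : (T.residue W u B P).card ≤ l) :
    T.inCW W ξ u (Fin.cons B fun i => (P.equivFin.symm i : Finset V) :
      Fin (P.card + 1) → Finset V) l := by
  set f : Fin P.card → Finset V := fun i => P.equivFin.symm i
  have hf : ∀ i, f i ∈ P := fun i => (P.equivFin.symm i).2
  have hf_inj : Function.Injective f := Subtype.val_injective.comp P.equivFin.symm.injective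
  have hcover : Finset.univ.biUnion (Fin.cons B f : Fin (P.card + 1) → Finset V) =
      B ∪ P.biUnion id := by
    ext x
    simp only [Finset.mem_biUnion, Finset.mem_univ, true_and, Fin.exists_fin_succ,
      Fin.cons_zero, Fin.cons_succ, Finset.mem_union, id]
    refine or_congr Iff.rfl ⟨fun ⟨i, hi⟩ => ⟨f i, hf i, hi⟩, fun ⟨p, hp, hx⟩ =>
      ⟨P.equivFin ⟨p, hp⟩, by simpa [f] using hx⟩⟩
  refine ⟨?_, ?_, ?_, ?_, fun _ => hP.mem_root, ?_, by rwa [hcover]⟩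
  · exact Fin.cases ⟨u, hP.mem_root⟩ fun i => hP.nonempty _ (hf i)
  · intro i j hij
    cases i using Fin.cases <;> cases j using Fin.cases <;>
      simp only [Fin.cons_zero, Fin.cons_succ]
    · exact absurd rfl hij
    · exact hP.disjoint_root _ (hf _)
    · exact (hP.disjoint_root _ (hf _)).symm
    · exact hP.pairwiseDisjoint (hf _) (hf _)
        (hf_inj.ne fun e => hij (congrArg Fin.succ e))
  · exact Fin.cases hP.root_subset fun i => hP.subset _ (hf i)
  · exact Fin.cases hP.root_connected fun i => hP.connected _ (hf i)
  · intro i hi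
    cases i using Fin.cases
    · exact absurd rfl hi
    · exact hP.conductance _ (hf _)

end Subpartition

section GammaW

variable {W : Finset V} {ξ : ℚ} {u : V} {k l : ℕ}

lemma GammaW_le {B : Finset V} {P : Finset (Finset V)} (hP : T.IsCSubpartition W ξ u B P)
    (hl : (T.residue W u B P).card ≤ l) :
    T.GammaW W ξ u (P.card + 1) l ≤ ((T.gammaValW W ξ u B : ℝ) : EReal) :=
  sInf_le ⟨P.card.succ_pos, _, hP.inCW_cons hl, rfl⟩

lemma le_GammaW {y : EReal} (hy : ∀ B P, T.IsCSubpartition W ξ u B P →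
      (T.residue W u B P).card ≤ l → P.card + 1 = k →
        y ≤ ((T.gammaValW W ξ u B : ℝ) : EReal)) :
    y ≤ T.GammaW W ξ u k l := by
  refine le_sInf ?_
  rintro _ ⟨hk, A, hA, rfl⟩
  obtain ⟨P, hcard, hP, hres⟩ := T.exists_isCSubpartition_of_inCW hk hA
  exact hy _ P hP hres hcard

lemma exists_eq_GammaW (h : T.GammaW W ξ u k l ≠ ⊤) :
    ∃ B P, T.IsCSubpartition W ξ u B P ∧ (T.residue W u B P).card ≤ l ∧ P.card + 1 = k ∧
      T.GammaW W ξ u k l = ((T.gammaValW W ξ u B : ℝ) : EReal) := by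
  unfold GammaW at h ⊢
  set S := {x : EReal | ∃ (h : 0 < k) (A : Fin k → Finset V),
    T.inCW W ξ u A l ∧ x = ((T.gammaValW W ξ u (A ⟨0, h⟩) : ℝ) : EReal)}
  have hne : S.Nonempty := Set.nonempty_iff_ne_empty.2 fun he => h (by rw [he, sInf_empty])
  have hfin : S.Finite :=
    (Set.finite_range fun B : Finset V => ((T.gammaValW W ξ u B : ℝ) : EReal)).subset
      (by rintro _ ⟨_, A, _, rfl⟩; exact ⟨_, rfl⟩)
  obtain ⟨hk, A, hA, hEq⟩ := hne.csInf_mem hfin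
  obtain ⟨P, hcard, hP, hres⟩ := T.exists_isCSubpartition_of_inCW hk hA
  exact ⟨_, P, hP, hres, hcard, hEq⟩

lemma GammaW_ne_bot : T.GammaW W ξ u k l ≠ ⊥ := by
  by_cases h : T.GammaW W ξ u k l = ⊤
  · simp [h]
  · obtain ⟨B, -, -, -, -, hEq⟩ := T.exists_eq_GammaW h
    rw [hEq]
    exact EReal.coe_ne_bot _

end GammaW

section Split

variable {T} {ξ : ℚ} {u ud : V} {W B B' B'' : Finset V} {P P' P'' : Finset (Finset V)}

lemma IsCSubpartition.subset_descW (hP : T.IsCSubpartition W ξ u B P) {p : Finset V}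
    (hp : p ∈ insert B P) : p ⊆ T.descW W u := by
  rcases Finset.mem_insert.1 hp with rfl | hp
  exacts [hP.root_subset, hP.subset p hp]

lemma IsCSubpartition.subset_desc (hP : T.IsCSubpartition W ξ u B P) {p : Finset V}
    (hp : p ∈ insert B P) : p ⊆ T.desc u :=
  (hP.subset_descW hp).trans (T.descW_subset_desc W u)

lemma IsCSubpartition.cover_subset (hP : T.IsCSubpartition W ξ u B P) :
    B ∪ P.biUnion id ⊆ T.descW W u :=
  Finset.union_subset (hP.subset_descW (Finset.mem_insert_self B P))
    (Finset.biUnion_subset.2 fun _ hp => hP.subset_descW (Finset.mem_insert_of_mem hp))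

lemma IsCSubpartition.sdiff_desc (h : ud ∈ T.children u)
    (hP : T.IsCSubpartition Finset.univ ξ u B P) :
    T.IsCSubpartition (T.groundT' ud) ξ u (B \ T.desc ud)
      (P.filter fun p => ¬ p ⊆ T.desc ud) := by
  have hsub : ∀ p ∈ insert B P, p ⊆ T.desc u := fun p hp => hP.subset_desc hp
  have hdisj : ∀ p ∈ P.filter fun p => ¬ p ⊆ T.desc ud, Disjoint p (T.desc ud) := fun p hp =>
    have hp := Finset.mem_filter.1 hp
    (T.subset_desc_or_disjoint_desc h (hP.connected p hp.1) (hsub p (Finset.mem_insert_of_mem hp.1))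
      (hP.notMem hp.1)).resolve_left hp.2
  refine ⟨Finset.mem_sdiff.2 ⟨hP.mem_root, T.notMem_desc_of_mem_children h⟩, ?_,
    T.connectedIn_sdiff_desc hP.root_connected (hsub B (Finset.mem_insert_self B P)) hP.mem_root
      (T.notMem_desc_of_mem_children h), fun p hp => hP.nonempty p (Finset.mem_filter.1 hp).1, ?_,
    fun p hp => hP.connected p (Finset.mem_filter.1 hp).1, fun p hp => ?_,
    fun p hp => (hP.disjoint_root p (Finset.mem_filter.1 hp).1).mono_left Finset.sdiff_subset,
    hP.pairwiseDisjoint.subset (Finset.coe_subset.2 (Finset.filter_subset _ _))⟩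
  · rw [T.descW_groundT']
    exact Finset.sdiff_subset_sdiff (hsub B (Finset.mem_insert_self B P)) subset_rfl
  · intro p hp
    rw [T.descW_groundT']
    exact Finset.subset_sdiff.2
      ⟨hsub p (Finset.mem_insert_of_mem (Finset.mem_filter.1 hp).1), hdisj p hp⟩
  · have hpP := (Finset.mem_filter.1 hp).1
    rw [T.cutW_groundT'_eq h (hdisj p hp) (hP.notMem hpP)]
    exact hP.conductance p hpP

lemma IsCSubpartition.inter_insert_desc (h : ud ∈ T.children u)
    (hP : T.IsCSubpartition Finset.univ ξ u B P) :
    T.IsCSubpartition (T.groundT'' u ud) ξ u (B ∩ insert u (T.desc ud))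
      (P.filter fun p => p ⊆ T.desc ud) := by
  refine ⟨Finset.mem_inter.2 ⟨hP.mem_root, Finset.mem_insert_self u _⟩,
    T.descW_groundT'' h ▸ Finset.inter_subset_right,
    T.connectedIn_inter_insert_desc h hP.root_connected (T.descW_univ u ▸ hP.root_subset)
      hP.mem_root,
    fun p hp => hP.nonempty p (Finset.mem_filter.1 hp).1,
    fun p hp => T.descW_groundT'' h ▸ (Finset.mem_filter.1 hp).2.trans (Finset.subset_insert _ _),
    fun p hp => hP.connected p (Finset.mem_filter.1 hp).1, fun p hp => ?_,
    fun p hp => (hP.disjoint_root p (Finset.mem_filter.1 hp).1).mono_left Finset.inter_subset_left,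
    hP.pairwiseDisjoint.subset (Finset.coe_subset.2 (Finset.filter_subset _ _))⟩
  rw [T.cutW_groundT''_eq (Finset.mem_filter.1 hp).2]
  exact hP.conductance p (Finset.mem_filter.1 hp).1

end Split

section Glue

variable {T} {ξ : ℚ} {u ud : V} {B' B'' : Finset V} {P' P'' : Finset (Finset V)}

lemma IsCSubpartition.subset_sdiff_desc (h' : T.IsCSubpartition (T.groundT' ud) ξ u B' P')
    {p : Finset V} (hp : p ∈ insert B' P') : p ⊆ T.desc u \ T.desc ud :=
  T.descW_groundT' u ud ▸ h'.subset_descW hp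

lemma IsCSubpartition.subset_insert_desc (h : ud ∈ T.children u)
    (h'' : T.IsCSubpartition (T.groundT'' u ud) ξ u B'' P'') {p : Finset V}
    (hp : p ∈ insert B'' P'') : p ⊆ insert u (T.desc ud) :=
  T.descW_groundT'' h ▸ h''.subset_descW hp

lemma IsCSubpartition.subset_desc_of_mem (h : ud ∈ T.children u)
    (h'' : T.IsCSubpartition (T.groundT'' u ud) ξ u B'' P'') {p : Finset V} (hp : p ∈ P'') :
    p ⊆ T.desc ud := fun _ hv =>
  (Finset.mem_insert.1 (h''.subset_insert_desc h (Finset.mem_insert_of_mem hp) hv)).resolve_left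
    fun e => h''.notMem hp (e ▸ hv)

lemma IsCSubpartition.union (h : ud ∈ T.children u)
    (h' : T.IsCSubpartition (T.groundT' ud) ξ u B' P')
    (h'' : T.IsCSubpartition (T.groundT'' u ud) ξ u B'' P'') :
    T.IsCSubpartition Finset.univ ξ u (B' ∪ B'') (P' ∪ P'') := by
  have hroot' := h'.subset_sdiff_desc (Finset.mem_insert_self B' P')
  have hroot'' := h''.subset_insert_desc h (Finset.mem_insert_self B'' P'')
  have hdesc' := h'.subset_desc (Finset.mem_insert_self B' P')
  have hdesc'' := h''.subset_desc (Finset.mem_insert_self B'' P'')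
  refine ⟨Finset.mem_union_left _ h'.mem_root, ?_, ?_, ?_, ?_, ?_, ?_, ?_, ?_⟩
  · exact T.descW_univ u ▸ Finset.union_subset hdesc' hdesc''
  · exact T.connectedIn_union h'.root_connected h''.root_connected hdesc' hdesc''
      h'.mem_root h''.mem_root
  · exact Finset.forall_mem_union.2 ⟨h'.nonempty, h''.nonempty⟩
  · refine Finset.forall_mem_union.2 ⟨fun p hp => ?_, fun p hp => ?_⟩ <;> rw [T.descW_univ]
    exacts [h'.subset_desc (Finset.mem_insert_of_mem hp),
      h''.subset_desc (Finset.mem_insert_of_mem hp)]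
  · exact Finset.forall_mem_union.2 ⟨h'.connected, h''.connected⟩
  · refine Finset.forall_mem_union.2 ⟨fun p hp => ?_, fun p hp => ?_⟩
    · rw [← T.cutW_groundT'_eq h (Finset.subset_sdiff.1
        (h'.subset_sdiff_desc (Finset.mem_insert_of_mem hp))).2 (h'.notMem hp)]
      exact h'.conductance p hp
    · rw [← T.cutW_groundT''_eq (u := u) (h''.subset_desc_of_mem h hp)]
      exact h''.conductance p hp
  · refine Finset.forall_mem_union.2 ⟨fun p hp => ?_, fun p hp => ?_⟩
    · exact Finset.disjoint_union_left.2 ⟨h'.disjoint_root p hp,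
        (T.disjoint_of_subset_sdiff_of_subset_insert
          (h'.subset_sdiff_desc (Finset.mem_insert_of_mem hp)) hroot''
          (Or.inl (h'.notMem hp))).symm⟩
    · exact Finset.disjoint_union_left.2 ⟨T.disjoint_of_subset_sdiff_of_subset_insert hroot'
        (h''.subset_insert_desc h (Finset.mem_insert_of_mem hp)) (Or.inr (h''.notMem hp)),
        h''.disjoint_root p hp⟩
  · rw [Finset.coe_union]
    exact h'.pairwiseDisjoint.union h''.pairwiseDisjoint fun p hp q hq _ =>
      T.disjoint_of_subset_sdiff_of_subset_insert
        (h'.subset_sdiff_desc (Finset.mem_insert_of_mem hp))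
        (h''.subset_insert_desc h (Finset.mem_insert_of_mem hq)) (Or.inr (h''.notMem hq))

lemma IsCSubpartition.disjoint_parts (h : ud ∈ T.children u)
    (h' : T.IsCSubpartition (T.groundT' ud) ξ u B' P')
    (h'' : T.IsCSubpartition (T.groundT'' u ud) ξ u B'' P'') :
    Disjoint P' P'' :=
  Finset.disjoint_left.2 fun p hp hp'' => (h'.nonempty p hp).ne_empty <|
    (Finset.disjoint_self_iff_empty p).1 <| T.disjoint_of_subset_sdiff_of_subset_insert
      (h'.subset_sdiff_desc (Finset.mem_insert_of_mem hp))
      (h''.subset_insert_desc h (Finset.mem_insert_of_mem hp'')) (Or.inl (h'.notMem hp))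

lemma IsCSubpartition.card_residue_union (h : ud ∈ T.children u)
    (h' : T.IsCSubpartition (T.groundT' ud) ξ u B' P')
    (h'' : T.IsCSubpartition (T.groundT'' u ud) ξ u B'' P'') :
    (T.residue Finset.univ u (B' ∪ B'') (P' ∪ P'')).card =
      (T.residue (T.groundT' ud) u B' P').card + (T.residue (T.groundT'' u ud) u B'' P'').card := by
  have hD : T.desc u = (T.desc u \ T.desc ud) ∪ insert u (T.desc ud) := by
    rw [Finset.union_insert, Finset.sdiff_union_of_subset (T.desc_subset_of_mem_children h),
      Finset.insert_eq_of_mem (T.mem_desc_self u)]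
  have hinter : (T.desc u \ T.desc ud) ∩ insert u (T.desc ud) ⊆
      (B' ∪ P'.biUnion id) ∩ (B'' ∪ P''.biUnion id) := by
    intro x hx
    obtain ⟨hx', hx''⟩ := Finset.mem_inter.1 hx
    rcases Finset.mem_insert.1 hx'' with rfl | hxd
    · exact Finset.mem_inter.2
        ⟨Finset.mem_union_left _ h'.mem_root, Finset.mem_union_left _ h''.mem_root⟩
    · exact absurd hxd (Finset.mem_sdiff.1 hx').2
  unfold residue
  rw [T.descW_univ, Finset.union_biUnion, Finset.union_union_union_comm, T.descW_groundT',
    T.descW_groundT'' h]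
  conv_lhs => rw [hD]
  exact Finset.card_union_sdiff_union_of_inter_subset
    (T.descW_groundT' u ud ▸ h'.cover_subset) (T.descW_groundT'' h ▸ h''.cover_subset) hinter

lemma IsCSubpartition.gammaValW_union (h : ud ∈ T.children u)
    (h' : T.IsCSubpartition (T.groundT' ud) ξ u B' P')
    (h'' : T.IsCSubpartition (T.groundT'' u ud) ξ u B'' P'') :
    T.gammaValW Finset.univ ξ u (B' ∪ B'') =
      T.gammaValW (T.groundT' ud) ξ u B' + T.gammaValW (T.groundT'' u ud) ξ u B'' :=
  T.gammaValW_union h ξ (h'.subset_sdiff_desc (Finset.mem_insert_self B' P'))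
    (h''.subset_insert_desc h (Finset.mem_insert_self B'' P'')) h'.mem_root h''.mem_root

end Glue

section Decomposition

variable {ξ : ℚ} {u ud : V}

lemma GammaW_univ_le_add (h : ud ∈ T.children u) (k' k'' l' l'' : ℕ) :
    T.GammaW Finset.univ ξ u (k' + k'' - 1) (l' + l'') ≤
      T.GammaW (T.groundT' ud) ξ u k' l' + T.GammaW (T.groundT'' u ud) ξ u k'' l'' := by
  by_cases h₁ : T.GammaW (T.groundT' ud) ξ u k' l' = ⊤
  · rw [h₁, EReal.top_add_of_ne_bot (T.GammaW_ne_bot)]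
    exact le_top
  by_cases h₂ : T.GammaW (T.groundT'' u ud) ξ u k'' l'' = ⊤
  · rw [h₂, EReal.add_top_of_ne_bot (T.GammaW_ne_bot)]
    exact le_top
  obtain ⟨B', P', h', hres', rfl, hΓ'⟩ := T.exists_eq_GammaW h₁
  obtain ⟨B'', P'', h'', hres'', rfl, hΓ''⟩ := T.exists_eq_GammaW h₂
  have hk : P'.card + 1 + (P''.card + 1) - 1 = (P' ∪ P'').card + 1 := by
    rw [Finset.card_union_of_disjoint (h'.disjoint_parts h h'')]
    omega
  calc T.GammaW Finset.univ ξ u (P'.card + 1 + (P''.card + 1) - 1) (l' + l'')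
      ≤ ((T.gammaValW Finset.univ ξ u (B' ∪ B'') : ℝ) : EReal) := by
        rw [hk]
        exact T.GammaW_le (h'.union h h'')
          ((h'.card_residue_union h h'').trans_le (add_le_add hres' hres''))
    _ = _ := by
        rw [hΓ', hΓ'', h'.gammaValW_union h h'', Rat.cast_add, EReal.coe_add]

lemma exists_GammaW_add_le (h : ud ∈ T.children u) {B : Finset V} {P : Finset (Finset V)}
    {l : ℕ} (hP : T.IsCSubpartition Finset.univ ξ u B P)
    (hl : (T.residue Finset.univ u B P).card ≤ l) :
    ∃ k' k'' l' l'' : ℕ, 1 ≤ k' ∧ 1 ≤ k'' ∧ k' + k'' = P.card + 2 ∧ l' + l'' = l ∧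
      T.GammaW (T.groundT' ud) ξ u k' l' + T.GammaW (T.groundT'' u ud) ξ u k'' l'' ≤
        ((T.gammaValW Finset.univ ξ u B : ℝ) : EReal) := by
  set B' := B \ T.desc ud
  set B'' := B ∩ insert u (T.desc ud)
  set P' := P.filter fun p => ¬ p ⊆ T.desc ud
  set P'' := P.filter fun p => p ⊆ T.desc ud
  have h' : T.IsCSubpartition (T.groundT' ud) ξ u B' P' := hP.sdiff_desc h
  have h'' : T.IsCSubpartition (T.groundT'' u ud) ξ u B'' P'' := hP.inter_insert_desc h
  have hB : B' ∪ B'' = B := by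
    ext v
    simp only [B', B'', Finset.mem_union, Finset.mem_sdiff, Finset.mem_inter, Finset.mem_insert]
    tauto
  have hPP : P' ∪ P'' = P := by
    rw [Finset.union_comm, Finset.filter_union_filter_not_eq]
  have hres := h'.card_residue_union h h''
  rw [hB, hPP] at hres
  have hcard : P''.card + P'.card = P.card := Finset.card_filter_add_card_filter_not _
  set r' := (T.residue (T.groundT' ud) u B' P').card
  refine ⟨P'.card + 1, P''.card + 1, r', l - r', le_add_self, le_add_self, by omega, by omega,
    ?_⟩
  calc _ ≤ ((T.gammaValW (T.groundT' ud) ξ u B' : ℝ) : EReal) +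
        ((T.gammaValW (T.groundT'' u ud) ξ u B'' : ℝ) : EReal) :=
        add_le_add (T.GammaW_le h' le_rfl) (T.GammaW_le h'' (by omega))
    _ = _ := by
        rw [← EReal.coe_add, ← Rat.cast_add, ← h'.gammaValW_union h h'', hB]

end Decomposition

end RTree

theorem stmt14_general {V : Type} [Fintype V] [DecidableEq V] (T : RTree V)
    (ξ : ℚ) (u ud : V) (hud : ud ∈ T.children u)
    (k l : ℕ) :
    T.GammaW Finset.univ ξ u k l =
      sInf {x : EReal | ∃ k' k'' l' l'' : ℕ, 1 ≤ k' ∧ 1 ≤ k'' ∧ k' + k'' = k + 1 ∧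
        l' + l'' = l ∧
        x = T.GammaW (Finset.univ \ T.desc ud) ξ u k' l' +
            T.GammaW ((Finset.univ \ T.desc u) ∪ insert u (T.desc ud)) ξ u k'' l''} := by
  apply le_antisymm
  · refine le_sInf ?_
    rintro _ ⟨k', k'', l', l'', -, -, hk, rfl, rfl⟩
    obtain rfl : k = k' + k'' - 1 := by omega
    exact T.GammaW_univ_le_add hud k' k'' l' l''
  · refine T.le_GammaW fun B P hP hl hk => ?_
    obtain ⟨k', k'', l', l'', hk', hk'', hsum, hl', hle⟩ := T.exists_GammaW_add_le hud hP hl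
    exact sInf_le_of_le ⟨k', k'', l', l'', hk', hk'', by omega, hl', rfl⟩ hle

/-- inductive step of Lemma 2: for a vertex `u` with at least two
children and a distinguished child `u_d`, letting `T' = T \ T_{u_d}` (ground set
`univ \ desc u_d`) and `T'' = T \ (T_{u_1} ∪ ⋯ ∪ T_{u_{d−1}})` (ground set
`(univ \ desc u) ∪ {u} ∪ desc u_d`), we have
`Γ(k,l) = min{Γ'(k',l') + Γ''(k'',l'') : k' + k'' = k + 1, k',k'' ≥ 1, l' + l'' = l}`. -/
theorem stmt14 {V : Type} [Fintype V] [DecidableEq V] (T : RTree V)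
    (ξ : ℚ) (hξ : 0 ≤ ξ) (u ud : V) (hud : ud ∈ T.children u)
    (hd2 : ∃ v ∈ T.children u, v ≠ ud) (k l : ℕ) (hk : 1 ≤ k) :
    T.GammaW Finset.univ ξ u k l =
      sInf {x : EReal | ∃ k' k'' l' l'' : ℕ, 1 ≤ k' ∧ 1 ≤ k'' ∧ k' + k'' = k + 1 ∧
        l' + l'' = l ∧
        x = T.GammaW (Finset.univ \ T.desc ud) ξ u k' l' +
            T.GammaW ((Finset.univ \ T.desc u) ∪ insert u (T.desc ud)) ξ u k'' l''} :=
  stmt14_general T ξ u ud hud k l
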